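/- Space translate estimate for the approximate potential: let ε > 0, α_0 > 0, α_1 > 0, and assume hypotheses (H). There exists a constant C > 0, depending only on λ, α_0, α_1, V, ΔΨ_0^pzc, ΔΨ_1^pzc, P^max, N^max, ρ_hl and T (and independent of the mesh, of Δt and of η), such that for every mesh of size h, every time step, every solution of the scheme (S) satisfying 0 ≤ P_i^k ≤ P^max and 0 ≤ N_i^k ≤ N^max, and every η with 0 < η < h, one has ∫_0^T ∫_0^{1−η} (Ψ_{h,Δt}(x+η, t) − Ψ_{h,Δt}(x, t))² dx dt ≤ C η, where Ψ_{h,Δt} is the approximate potential. -/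

import Mathlib

open MeasureTheory Real Filter Topology

noncomputable section

namespace Corrosion

/-- The Bernoulli function `B(x) = x / (e^x - 1)`, `B(0) = 1`. -/
def Bern (x : ℝ) : ℝ := if x = 0 then 1 else x / (Real.exp x - 1)

/-- The two species: cations `P` and electrons `N`. -/
inductive Sp | P | N

/-- charge numbers: `z_P = 3`, `z_N = -1`. -/
def z : Sp → ℝ
  | Sp.P => 3
  | Sp.N => -1

/-- A mesh of `[0,1]`: edge points `xe 0 = x_{1/2} = 0 < xe 1 = x_{3/2} < … < xe I = x_{I+1/2} = 1`. -/
structure Mesh where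
  I : ℕ
  hI : 1 ≤ I
  xe : ℕ → ℝ
  xe0 : xe 0 = 0
  xeI : xe I = 1
  mono : ∀ j, j < I → xe j < xe (j + 1)

namespace Mesh

variable (m : Mesh)

/-- cell centers `x_i` for `1 ≤ i ≤ I` , with `x_0 = 0` and `x_{I+1} = 1`. -/
def xc (i : ℕ) : ℝ :=
  if i = 0 then 0 else if i = m.I + 1 then 1 else (m.xe (i - 1) + m.xe i) / 2

/-- `h_i = x_{i+1/2} - x_{i-1/2}` for `1 ≤ i ≤ I`. -/
def h (i : ℕ) : ℝ := m.xe i - m.xe (i - 1)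

/-- `h_{i+1/2} = x_{i+1} - x_i` for `0 ≤ i ≤ I`. -/
def hp (i : ℕ) : ℝ := m.xc (i + 1) - m.xc i

/-- mesh size `h = max_{1 ≤ i ≤ I} h_i`. -/
def size : ℝ := (Finset.Icc 1 m.I).sup' ⟨1, Finset.mem_Icc.mpr ⟨le_refl 1, m.hI⟩⟩ m.h

/-- piecewise constant function associated to a vector `(w_i)_{0 ≤ i ≤ I+1}`:
equal to `w i` on `(x_{i-1/2}, x_{i+1/2})`, to `w 0` at `x = 0`, to `w (I+1)` at `x = 1`. -/
def pw (w : ℕ → ℝ) (x : ℝ) : ℝ :=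
  if x = 0 then w 0 else if x = 1 then w (m.I + 1) else w (sInf {i : ℕ | x < m.xe i})

/-- square of the discrete `H¹` norm `‖w_h‖_{1,T}`. -/
def norm1sq (w : ℕ → ℝ) : ℝ :=
  (∑ i ∈ Finset.range (m.I + 1), (w (i + 1) - w i) ^ 2 / m.hp i) + w 0 ^ 2 + w (m.I + 1) ^ 2

/-- square of the discrete `L²` norm `‖w_h‖_0`. -/
def norm0sq (w : ℕ → ℝ) : ℝ := ∑ i ∈ Finset.Icc 1 m.I, m.h i * w i ^ 2

/-- the discrete dual norm `‖w_h‖_{-1,2,T}`. -/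
def normDual (w : ℕ → ℝ) : ℝ :=
  sSup {r : ℝ | ∃ v : ℕ → ℝ, m.norm1sq v ≤ 1 ∧
    r = ∫ x in Set.Ioo (0:ℝ) 1, m.pw w x * m.pw v x}

/-- piecewise constant space derivative: on `(x_i, x_{i+1})` it equals `(w_{i+1} - w_i)/h_{i+1/2}`. -/
def dpw (w : ℕ → ℝ) (x : ℝ) : ℝ :=
  (w (sInf {i : ℕ | x < m.xc (i + 1)} + 1) - w (sInf {i : ℕ | x < m.xc (i + 1)})) /
    m.hp (sInf {i : ℕ | x < m.xc (i + 1)})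

end Mesh

/-- All the data of the corrosion model. -/
structure Data where
  lam : ℝ
  eps : ℝ
  alpha0 : ℝ
  alpha1 : ℝ
  V : ℝ
  rho : ℝ
  dPsi0 : ℝ
  dPsi1 : ℝ
  umax : Sp → ℝ
  m0 : Sp → ℝ
  k0 : Sp → ℝ
  m1 : Sp → ℝ
  k1 : Sp → ℝ
  a0 : Sp → ℝ
  b0 : Sp → ℝ
  a1 : Sp → ℝ
  b1 : Sp → ℝ
  u0 : Sp → ℝ → ℝ
  lam_pos : 0 < lam
  umax_pos : ∀ u, 0 < umax u
  m0_pos : ∀ u, 0 < m0 u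
  k0_pos : ∀ u, 0 < k0 u
  m1_pos : ∀ u, 0 < m1 u
  k1_pos : ∀ u, 0 < k1 u
  a0_mem : ∀ u, a0 u ∈ Set.Icc (0:ℝ) 1
  b0_mem : ∀ u, b0 u ∈ Set.Icc (0:ℝ) 1
  a1_mem : ∀ u, a1 u ∈ Set.Icc (0:ℝ) 1
  b1_mem : ∀ u, b1 u ∈ Set.Icc (0:ℝ) 1
  u0_meas : ∀ u, Measurable (u0 u)

namespace Data
variable (d : Data)

/-- `ε_P = 1`, `ε_N = ε`. -/
def epsu : Sp → ℝ
  | Sp.P => 1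
  | Sp.N => d.eps

def beta0 (u : Sp) (x : ℝ) : ℝ :=
  d.m0 u * Real.exp (-(z u) * d.b0 u * x) + d.k0 u * Real.exp (z u * d.a0 u * x)

def beta1 (u : Sp) (x : ℝ) : ℝ :=
  d.m1 u * Real.exp (-(z u) * d.b1 u * x) + d.k1 u * Real.exp (z u * d.a1 u * x)

def gamma0 (u : Sp) (x : ℝ) : ℝ := d.m0 u * d.umax u * Real.exp (-(z u) * d.b0 u * x)

def gamma1 (u : Sp) (x : ℝ) : ℝ := d.k1 u * d.umax u * Real.exp (z u * d.a1 u * x)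

/-- Hypotheses (H). -/
def HypH : Prop :=
  (3 * d.umax Sp.P - d.umax Sp.N + d.rho = 0) ∧
  (∀ u, ∀ᵐ x ∂(volume.restrict (Set.Ioo (0:ℝ) 1)), 0 ≤ d.u0 u x ∧ d.u0 u x ≤ d.umax u) ∧
  (-(1 / (3 * d.a0 Sp.P)) * (1 + Real.log (d.alpha0 * d.a0 Sp.P * d.k0 Sp.P)) ≤ d.dPsi0 ∧
    d.dPsi0 ≤ (1 / d.a0 Sp.N) * (1 + Real.log (d.alpha0 * d.a0 Sp.N * d.k0 Sp.N))) ∧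
  (-(1 / d.b1 Sp.N) * (1 + Real.log (d.alpha1 * d.b1 Sp.N * d.m1 Sp.N)) ≤ d.dPsi1 ∧
    d.dPsi1 ≤ (1 / (3 * d.b1 Sp.P)) * (1 + Real.log (d.alpha1 * d.b1 Sp.P * d.m1 Sp.P)))

end Data

/-- `dΨ_{i+1/2} = (Ψ_{i+1} - Ψ_i)/h_{i+1/2}`. -/
def dPsiF (m : Mesh) (Psi : ℕ → ℝ) (i : ℕ) : ℝ := (Psi (i + 1) - Psi i) / m.hp i

/-- the Scharfetter-Gummel numerical flux `F_{u,i+1/2}`. -/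
def Flux (m : Mesh) (d : Data) (u : Sp) (Psi w : ℕ → ℝ) (i : ℕ) : ℝ :=
  (Bern (z u * m.hp i * dPsiF m Psi i) * w i -
    Bern (-(z u) * m.hp i * dPsiF m Psi i) * w (i + 1)) / m.hp i

/-- The fully implicit scheme (S), with time step `Δt = T / K`.
`sol u k i` is `u_i^k` (for `u = P, N`) and `Psi k i` is `Ψ_i^k`. -/
def Scheme (m : Mesh) (d : Data) (T : ℝ) (K : ℕ)
    (sol : Sp → ℕ → ℕ → ℝ) (Psi : ℕ → ℕ → ℝ) : Prop :=
  (∀ u i, 1 ≤ i → i ≤ m.I →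
    sol u 0 i = (1 / m.h i) * ∫ x in Set.Ioo (m.xe (i - 1)) (m.xe i), d.u0 u x) ∧
  (∀ k, k < K → ∀ i, 1 ≤ i → i ≤ m.I →
    -(d.lam ^ 2) * (dPsiF m (Psi (k + 1)) i - dPsiF m (Psi (k + 1)) (i - 1)) =
      m.h i * (3 * sol Sp.P (k + 1) i - sol Sp.N (k + 1) i + d.rho)) ∧
  (∀ u k, k < K → ∀ i, 1 ≤ i → i ≤ m.I →
    d.epsu u * m.h i * (sol u (k + 1) i - sol u k i) / (T / K) +
      Flux m d u (Psi (k + 1)) (sol u (k + 1)) i -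
      Flux m d u (Psi (k + 1)) (sol u (k + 1)) (i - 1) = 0) ∧
  (∀ k, k < K → Psi (k + 1) 0 - d.alpha0 * dPsiF m (Psi (k + 1)) 0 = d.dPsi0) ∧
  (∀ k, k < K →
    Psi (k + 1) (m.I + 1) + d.alpha1 * dPsiF m (Psi (k + 1)) m.I = d.V - d.dPsi1) ∧
  (∀ u k, k < K →
    -(Flux m d u (Psi (k + 1)) (sol u (k + 1)) 0) =
      d.beta0 u (Psi (k + 1) 0) * sol u (k + 1) 0 - d.gamma0 u (Psi (k + 1) 0)) ∧
  (∀ u k, k < K →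
    Flux m d u (Psi (k + 1)) (sol u (k + 1)) m.I =
      d.beta1 u (d.V - Psi (k + 1) (m.I + 1)) * sol u (k + 1) (m.I + 1) -
      d.gamma1 u (d.V - Psi (k + 1) (m.I + 1)))

/-- The stability property `0 ≤ u_i^k ≤ u^max` for all `i, k`. -/
def Stable (m : Mesh) (d : Data) (K : ℕ) (sol : Sp → ℕ → ℕ → ℝ) : Prop :=
  ∀ u k, k ≤ K → ∀ i, i ≤ m.I + 1 → 0 ≤ sol u k i ∧ sol u k i ≤ d.umax u

/-- the approximate space-time solution `w_{h,Δt}`, equal to the piecewise constant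
function built on `w^{k+1}` for `t ∈ [t^k, t^{k+1})`, with `Δt = T/K`. -/
def apx (m : Mesh) (T : ℝ) (K : ℕ) (w : ℕ → ℕ → ℝ) (x t : ℝ) : ℝ :=
  m.pw (w (Nat.floor (t / (T / K)) + 1)) x

/-- the discrete space derivative `∂_{x,T} w_{h,Δt}`. -/
def dapx (m : Mesh) (T : ℝ) (K : ℕ) (w : ℕ → ℕ → ℝ) (x t : ℝ) : ℝ :=
  m.dpw (w (Nat.floor (t / (T / K)) + 1)) x


/-- hyperbolic cotangent `coth y = cosh y / sinh y`. -/
def coth (x : ℝ) : ℝ := Real.cosh x / Real.sinh x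

/-- approximate trace at `x = 0`: `t ∈ [t^k, t^{k+1}) ↦ w_0^{k+1}`. -/
def trace0 (T : ℝ) (K : ℕ) (w : ℕ → ℕ → ℝ) (t : ℝ) : ℝ :=
  w (Nat.floor (t / (T / K)) + 1) 0

/-- approximate trace at `x = 1`: `t ∈ [t^k, t^{k+1}) ↦ w_{I+1}^{k+1}`. -/
def trace1 (m : Mesh) (T : ℝ) (K : ℕ) (w : ℕ → ℕ → ℝ) (t : ℝ) : ℝ :=
  w (Nat.floor (t / (T / K)) + 1) (m.I + 1)

/-- the measure on `(0,1) × (0,T)` (space × time). -/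
def stMeasure (T : ℝ) : MeasureTheory.Measure (ℝ × ℝ) :=
  (MeasureTheory.volume.restrict (Set.Ioo (0:ℝ) 1)).prod
    (MeasureTheory.volume.restrict (Set.Ioo (0:ℝ) T))

end Corrosion

/-!
At every time level the potential solves a discrete Poisson problem with Fourier boundary
conditions whose right-hand side `3 P - N + ρ_hl` is bounded thanks to the stability bounds.
Testing this problem against the potential itself (summation by parts) bounds its discrete `H¹`
norm uniformly in the mesh and the time level.

A piecewise constant function jumps by `w_{j+1} - w_j` at `x_{j+1/2}`, so by Cauchy–Schwarz with
weights `h_{j+1/2}` (which sum to `1`) the square of the difference between the function at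
`x + η` and at `x` is at most the sum of `(w_{j+1} - w_j)² / h_{j+1/2}` over the interfaces
crossed. Each interface is crossed for a set of `x` of measure at most `η`, so the integral of
that square is at most `η` times the discrete `H¹` norm; integrating in time gives a factor `T`.
-/

namespace Corrosion

lemma sum_range_sub_mul_succ {R : Type*} [CommRing R] (a w : ℕ → R) (n : ℕ) :
    ∑ j ∈ Finset.range n, (a j - a (j + 1)) * w (j + 1) =
      ∑ j ∈ Finset.range (n + 1), a j * (w (j + 1) - w j) + a 0 * w 0 - a n * w (n + 1) := by
  induction n with
  | zero => rw [Finset.sum_range_zero, Finset.sum_range_one]; ring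
  | succ n ih => rw [Finset.sum_range_succ, ih, Finset.sum_range_succ _ (n + 1)]; ring

lemma sq_le_sq_div_of_mul_sq_le {c B N : ℝ} (hc : 0 < c) (hN : 0 ≤ N)
    (h : c * N ^ 2 ≤ B * N) : N ^ 2 ≤ (B / c) ^ 2 := by
  rcases hN.eq_or_lt with rfl | hN
  · simpa using sq_nonneg (B / c)
  · have hNB : N ≤ B / c := by rw [le_div_iff₀ hc]; nlinarith
    exact pow_le_pow_left₀ hN.le hNB 2

lemma floor_div_div_lt {t T : ℝ} {K : ℕ} (hK : 1 ≤ K) (ht : t ∈ Set.Ioo 0 T) :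
    ⌊t / (T / K)⌋₊ < K := by
  have hK' : (0 : ℝ) < K := by exact_mod_cast hK
  have hτ : 0 < T / K := div_pos (ht.1.trans ht.2) hK'
  rw [Nat.floor_lt (div_pos ht.1 hτ).le, div_lt_iff₀ hτ, mul_div_cancel₀ _ hK'.ne']
  exact ht.2

namespace Mesh

variable (m : Mesh)

lemma xe_lt_xe {i j : ℕ} (hij : i < j) (hj : j ≤ m.I) : m.xe i < m.xe j := by
  induction j with
  | zero => omega
  | succ n ih =>
    rcases Nat.lt_succ_iff_lt_or_eq.mp hij with h | rfl
    · exact (ih h (by omega)).trans (m.mono n (by omega))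
    · exact m.mono i (by omega)

lemma xe_le_xe {i j : ℕ} (hij : i ≤ j) (hj : j ≤ m.I) : m.xe i ≤ m.xe j := by
  rcases hij.eq_or_lt with rfl | h
  · exact le_rfl
  · exact (m.xe_lt_xe h hj).le

lemma xc_zero : m.xc 0 = 0 := by simp [xc]

lemma xc_I_add_one : m.xc (m.I + 1) = 1 := by simp [xc]

lemma xc_of_mem {i : ℕ} (h1 : 1 ≤ i) (h2 : i ≤ m.I) : m.xc i = (m.xe (i - 1) + m.xe i) / 2 := by
  simp [xc, show i ≠ 0 by omega, show i ≠ m.I + 1 by omega]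

lemma hp_pos {i : ℕ} (hi : i ≤ m.I) : 0 < m.hp i := by
  have hI := m.hI
  rw [hp, sub_pos]
  rcases Nat.eq_zero_or_pos i with rfl | h1
  · rw [m.xc_zero, m.xc_of_mem le_rfl hI, ← m.xe0]
    linarith [m.mono 0 (by omega)]
  rcases hi.eq_or_lt with rfl | hiI
  · rw [m.xc_I_add_one, m.xc_of_mem h1 le_rfl, ← m.xeI]
    linarith [m.xe_lt_xe (show m.I - 1 < m.I by omega) le_rfl]
  · rw [m.xc_of_mem h1 hiI.le, m.xc_of_mem (i := i + 1) (by omega) hiI, Nat.add_sub_cancel]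
    linarith [m.xe_lt_xe (show i - 1 < i + 1 by omega) hiI]

lemma hp_pos_of_mem {i : ℕ} (hi : i ∈ Finset.range (m.I + 1)) : 0 < m.hp i :=
  m.hp_pos (Nat.lt_succ_iff.mp (Finset.mem_range.mp hi))

lemma Ico_one_subset_range : Finset.Ico 1 m.I ⊆ Finset.range (m.I + 1) :=
  Finset.range_eq_Ico (m.I + 1) ▸ Finset.Ico_subset_Ico (Nat.zero_le 1) (Nat.le_succ m.I)

lemma sum_hp : ∑ i ∈ Finset.range (m.I + 1), m.hp i = 1 := by
  simp only [hp]
  rw [Finset.sum_range_sub m.xc, m.xc_I_add_one, m.xc_zero, sub_zero]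

lemma sum_h : ∑ j ∈ Finset.range m.I, m.h (j + 1) = 1 := by
  simp only [h, Nat.add_sub_cancel]
  rw [Finset.sum_range_sub m.xe, m.xeI, m.xe0, sub_zero]

lemma h_nonneg {i : ℕ} (hi : i ≤ m.I) : 0 ≤ m.h i :=
  sub_nonneg.mpr (m.xe_le_xe (Nat.sub_le i 1) hi)

def energy (w : ℕ → ℝ) : ℝ := ∑ i ∈ Finset.range (m.I + 1), (w (i + 1) - w i) ^ 2 / m.hp i

lemma norm1sq_eq_energy (w : ℕ → ℝ) :
    m.norm1sq w = m.energy w + w 0 ^ 2 + w (m.I + 1) ^ 2 := rfl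

lemma sum_le_energy (w : ℕ → ℝ) {s : Finset ℕ} (hs : s ⊆ Finset.range (m.I + 1)) :
    ∑ i ∈ s, (w (i + 1) - w i) ^ 2 / m.hp i ≤ m.energy w :=
  Finset.sum_le_sum_of_subset_of_nonneg hs fun _ hi _ =>
    div_nonneg (sq_nonneg _) (m.hp_pos_of_mem hi).le

lemma energy_nonneg (w : ℕ → ℝ) : 0 ≤ m.energy w :=
  Finset.sum_nonneg fun _ hi => div_nonneg (sq_nonneg _) (m.hp_pos_of_mem hi).le

/-- Cauchy–Schwarz with the weights `h_{i+1/2}`, whose total is `1`. -/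
lemma sq_sum_le_sum_sq_div_hp (w : ℕ → ℝ) {s : Finset ℕ} (hs : s ⊆ Finset.range (m.I + 1)) :
    (∑ i ∈ s, (w (i + 1) - w i)) ^ 2 ≤ ∑ i ∈ s, (w (i + 1) - w i) ^ 2 / m.hp i := by
  have hpos : ∀ i ∈ s, 0 < m.hp i := fun _ hi => m.hp_pos_of_mem (hs hi)
  have hweights : ∑ i ∈ s, m.hp i ≤ 1 := m.sum_hp ▸
    Finset.sum_le_sum_of_subset_of_nonneg hs fun _ hi _ =>
      (m.hp_pos_of_mem hi).le
  calc (∑ i ∈ s, (w (i + 1) - w i)) ^ 2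
      ≤ (∑ i ∈ s, m.hp i) * ∑ i ∈ s, (w (i + 1) - w i) ^ 2 / m.hp i :=
        Finset.sum_sq_le_sum_mul_sum_of_sq_le_mul s (fun i hi => (hpos i hi).le)
          (fun i hi => div_nonneg (sq_nonneg _) (hpos i hi).le)
          (fun i hi => (mul_div_cancel₀ _ (hpos i hi).ne').ge)
    _ ≤ ∑ i ∈ s, (w (i + 1) - w i) ^ 2 / m.hp i :=
        mul_le_of_le_one_left (Finset.sum_nonneg fun i hi =>
          div_nonneg (sq_nonneg _) (hpos i hi).le) hweights

lemma norm1sq_nonneg (w : ℕ → ℝ) : 0 ≤ m.norm1sq w := by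
  rw [m.norm1sq_eq_energy]; have := m.energy_nonneg w; positivity

lemma abs_zero_le_sqrt_norm1sq (w : ℕ → ℝ) : |w 0| ≤ √(m.norm1sq w) := by
  refine Real.abs_le_sqrt ?_
  rw [m.norm1sq_eq_energy]; nlinarith [m.energy_nonneg w, sq_nonneg (w (m.I + 1))]

lemma abs_I_add_one_le_sqrt_norm1sq (w : ℕ → ℝ) : |w (m.I + 1)| ≤ √(m.norm1sq w) := by
  refine Real.abs_le_sqrt ?_
  rw [m.norm1sq_eq_energy]; nlinarith [m.energy_nonneg w, sq_nonneg (w 0)]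

lemma abs_le_two_mul_sqrt_norm1sq (w : ℕ → ℝ) {j : ℕ} (hj : j ≤ m.I + 1) :
    |w j| ≤ 2 * √(m.norm1sq w) := by
  have hs : Finset.range j ⊆ Finset.range (m.I + 1) := Finset.range_subset_range.mpr hj
  have hjump : (w j - w 0) ^ 2 ≤ m.norm1sq w := by
    rw [← Finset.sum_range_sub w j, m.norm1sq_eq_energy]
    nlinarith [m.sq_sum_le_sum_sq_div_hp w hs, m.sum_le_energy w hs, sq_nonneg (w (m.I + 1))]
  calc |w j| ≤ |w 0| + |w j - w 0| := by simpa using abs_add_le (w 0) (w j - w 0)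
    _ ≤ 2 * √(m.norm1sq w) := by
      linarith [Real.abs_le_sqrt hjump, m.abs_zero_le_sqrt_norm1sq w]

/-- Testing `-κ ∂ₓ∂ₓ w = r` against `w`, with summation by parts. -/
lemma energy_identity {κ : ℝ} {w r : ℕ → ℝ}
    (heq : ∀ i, 1 ≤ i → i ≤ m.I → -κ * (dPsiF m w i - dPsiF m w (i - 1)) = m.h i * r i) :
    κ * (m.energy w + dPsiF m w 0 * w 0 - dPsiF m w m.I * w (m.I + 1)) =
      ∑ j ∈ Finset.range m.I, m.h (j + 1) * r (j + 1) * w (j + 1) := by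
  have hterm : ∀ j ∈ Finset.range m.I, m.h (j + 1) * r (j + 1) * w (j + 1) =
      κ * ((dPsiF m w j - dPsiF m w (j + 1)) * w (j + 1)) := by
    intro j hj
    have := heq (j + 1) (by omega) (Finset.mem_range.mp hj)
    rw [Nat.add_sub_cancel] at this
    rw [← this]; ring
  have henergy : m.energy w = ∑ j ∈ Finset.range (m.I + 1), dPsiF m w j * (w (j + 1) - w j) :=
    Finset.sum_congr rfl fun j _ => by rw [dPsiF]; ring
  rw [Finset.sum_congr rfl hterm, ← Finset.mul_sum, sum_range_sub_mul_succ, henergy]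

lemma sum_h_mul_mul_le {R : ℝ} {w r : ℕ → ℝ} (hr : ∀ i, 1 ≤ i → i ≤ m.I → |r i| ≤ R) :
    ∑ j ∈ Finset.range m.I, m.h (j + 1) * r (j + 1) * w (j + 1) ≤ 2 * R * √(m.norm1sq w) := by
  calc ∑ j ∈ Finset.range m.I, m.h (j + 1) * r (j + 1) * w (j + 1)
      ≤ ∑ j ∈ Finset.range m.I, m.h (j + 1) * (R * (2 * √(m.norm1sq w))) := by
        refine Finset.sum_le_sum fun j hj => ?_
        have hjI : j + 1 ≤ m.I := Finset.mem_range.mp hj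
        have hrj := hr (j + 1) (by omega) hjI
        rw [mul_assoc]
        refine mul_le_mul_of_nonneg_left ?_ (m.h_nonneg hjI)
        calc r (j + 1) * w (j + 1) ≤ |r (j + 1)| * |w (j + 1)| :=
              abs_mul (r (j + 1)) _ ▸ le_abs_self _
          _ ≤ R * (2 * √(m.norm1sq w)) := mul_le_mul hrj
              (m.abs_le_two_mul_sqrt_norm1sq w (by omega)) (abs_nonneg _)
              ((abs_nonneg _).trans hrj)
    _ = 2 * R * √(m.norm1sq w) := by rw [← Finset.sum_mul, m.sum_h]; ring

theorem norm1sq_le_of_poisson {κ α₀ α₁ D₀ D₁ R : ℝ} (hκ : 0 < κ) (hα₀ : 0 < α₀) (hα₁ : 0 < α₁)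
    {w r : ℕ → ℝ} (hr : ∀ i, 1 ≤ i → i ≤ m.I → |r i| ≤ R)
    (heq : ∀ i, 1 ≤ i → i ≤ m.I → -κ * (dPsiF m w i - dPsiF m w (i - 1)) = m.h i * r i)
    (hw₀ : w 0 - α₀ * dPsiF m w 0 = D₀) (hw₁ : w (m.I + 1) + α₁ * dPsiF m w m.I = D₁) :
    m.norm1sq w ≤
      ((2 * R + κ / α₀ * |D₀| + κ / α₁ * |D₁|) / min κ (min (κ / α₀) (κ / α₁))) ^ 2 := by
  set c := min κ (min (κ / α₀) (κ / α₁))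
  set N := √(m.norm1sq w)
  have hNQ : N ^ 2 = m.norm1sq w := Real.sq_sqrt (m.norm1sq_nonneg w)
  have hc : 0 < c := lt_min hκ (lt_min (div_pos hκ hα₀) (div_pos hκ hα₁))
  have hcoercive : c * m.norm1sq w ≤
      κ * m.energy w + κ / α₀ * w 0 ^ 2 + κ / α₁ * w (m.I + 1) ^ 2 := by
    rw [m.norm1sq_eq_energy, mul_add, mul_add]
    gcongr
    exacts [m.energy_nonneg w, min_le_left _ _, (min_le_right _ _).trans (min_le_left _ _),
      (min_le_right _ _).trans (min_le_right _ _)]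
  have hidentity : κ * m.energy w + κ / α₀ * w 0 ^ 2 + κ / α₁ * w (m.I + 1) ^ 2 =
      ∑ j ∈ Finset.range m.I, m.h (j + 1) * r (j + 1) * w (j + 1) +
        κ / α₀ * (D₀ * w 0) + κ / α₁ * (D₁ * w (m.I + 1)) := by
    have h := m.energy_identity heq
    rw [show dPsiF m w 0 = (w 0 - D₀) / α₀ by rw [eq_div_iff hα₀.ne']; linarith,
      show dPsiF m w m.I = (D₁ - w (m.I + 1)) / α₁ by rw [eq_div_iff hα₁.ne']; linarith] at h
    linear_combination h
  have hboundary (α D v : ℝ) (hα : 0 < α) (hv : |v| ≤ N) : κ / α * (D * v) ≤ κ / α * |D| * N := by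
    rw [mul_assoc]
    refine mul_le_mul_of_nonneg_left ?_ (div_pos hκ hα).le
    calc D * v ≤ |D| * |v| := abs_mul D v ▸ le_abs_self _
      _ ≤ |D| * N := by gcongr
  refine hNQ ▸ sq_le_sq_div_of_mul_sq_le hc (Real.sqrt_nonneg _) ?_
  rw [hNQ]
  linarith [m.sum_h_mul_mul_le (w := w) hr,
    hboundary α₀ D₀ (w 0) hα₀ (m.abs_zero_le_sqrt_norm1sq w),
    hboundary α₁ D₁ (w (m.I + 1)) hα₁ (m.abs_I_add_one_le_sqrt_norm1sq w)]

lemma exists_cell {x : ℝ} (hx : x ∈ Set.Ioo (0 : ℝ) 1) :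
    ∃ j, 1 ≤ j ∧ j ≤ m.I ∧ m.xe (j - 1) ≤ x ∧ x < m.xe j ∧ ∀ w, m.pw w x = w j := by
  set S := {i : ℕ | x < m.xe i}
  have hI : m.I ∈ S := by simp [S, m.xeI, hx.2]
  have hmem : x < m.xe (sInf S) := Nat.sInf_mem ⟨m.I, hI⟩
  have hpos : sInf S ≠ 0 := fun h0 => by
    rw [h0, m.xe0] at hmem; exact hx.1.not_gt hmem
  refine ⟨sInf S, Nat.one_le_iff_ne_zero.mpr hpos, Nat.sInf_le hI,
    not_lt.mp (Nat.notMem_of_lt_sInf (s := S) (m := sInf S - 1) (by omega)), hmem, fun w => ?_⟩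
  simp [pw, hx.1.ne', hx.2.ne, S]

lemma pw_eq_add_sum (w : ℕ → ℝ) {x : ℝ} (hx : x ∈ Set.Ioo (0 : ℝ) 1) :
    m.pw w x = w 1 + ∑ j ∈ Finset.Ico 1 m.I with m.xe j ≤ x, (w (j + 1) - w j) := by
  obtain ⟨j, h1, hjI, hleft, hright, hpw⟩ := m.exists_cell hx
  have hcrossed : {i ∈ Finset.Ico 1 m.I | m.xe i ≤ x} = Finset.Ico 1 j := by
    ext i
    simp only [Finset.mem_filter, Finset.mem_Ico]
    constructor
    · rintro ⟨⟨hi1, hiI⟩, hix⟩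
      exact ⟨hi1, lt_of_not_ge fun hji => (m.xe_le_xe hji hiI.le).not_gt (hix.trans_lt hright)⟩
    · rintro ⟨hi1, hij⟩
      exact ⟨⟨hi1, by omega⟩, (m.xe_le_xe (by omega) (by omega)).trans hleft⟩
  rw [hpw, hcrossed, Finset.sum_Ico_sub w h1]
  ring

lemma pw_add_sub_pw (w : ℕ → ℝ) {x η : ℝ} (hη : 0 < η) (hx : x ∈ Set.Ioo 0 (1 - η)) :
    m.pw w (x + η) - m.pw w x =
      ∑ j ∈ Finset.Ico 1 m.I with x ∈ Set.Ico (m.xe j - η) (m.xe j), (w (j + 1) - w j) := by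
  rw [m.pw_eq_add_sum w ⟨by linarith [hx.1], by linarith [hx.2]⟩,
    m.pw_eq_add_sum w ⟨hx.1, by linarith [hx.2]⟩, add_sub_add_left_eq_sub,
    Finset.sum_filter, Finset.sum_filter, Finset.sum_filter, ← Finset.sum_sub_distrib]
  refine Finset.sum_congr rfl fun j _ => ?_
  simp only [Set.mem_Ico]
  by_cases h1 : m.xe j ≤ x + η <;> by_cases h2 : m.xe j ≤ x <;>
    simp only [h1, h2, if_true, if_false] <;> split_ifs with h3 <;>
    first
      | ring1
      | (exfalso; linarith [h3.1, h3.2])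
      | (exfalso; exact h3 ⟨by linarith, by linarith⟩)

lemma sq_pw_add_sub_pw_le (w : ℕ → ℝ) {x η : ℝ} (hη : 0 < η) (hx : x ∈ Set.Ioo 0 (1 - η)) :
    (m.pw w (x + η) - m.pw w x) ^ 2 ≤ ∑ j ∈ Finset.Ico 1 m.I,
      (Set.Ico (m.xe j - η) (m.xe j)).indicator (fun _ => (w (j + 1) - w j) ^ 2 / m.hp j) x := by
  have hs : {j ∈ Finset.Ico 1 m.I | x ∈ Set.Ico (m.xe j - η) (m.xe j)} ⊆ Finset.range (m.I + 1) :=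
    (Finset.filter_subset _ _).trans m.Ico_one_subset_range
  rw [m.pw_add_sub_pw w hη hx]
  refine (m.sq_sum_le_sum_sq_div_hp w hs).trans_eq ?_
  simp only [Finset.sum_filter, Set.indicator_apply]

theorem integral_sq_pw_add_sub_pw_le (w : ℕ → ℝ) {η : ℝ} (hη : 0 < η) :
    ∫ x in Set.Ioo 0 (1 - η), (m.pw w (x + η) - m.pw w x) ^ 2 ≤ η * m.norm1sq w := by
  have hint : ∀ j ∈ Finset.Ico 1 m.I, IntegrableOn
      ((Set.Ico (m.xe j - η) (m.xe j)).indicator fun _ => (w (j + 1) - w j) ^ 2 / m.hp j)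
        (Set.Ioo 0 (1 - η)) :=
    fun j _ => (integrableOn_const measure_Ioo_lt_top.ne).indicator measurableSet_Ico
  have hwindow : ∀ j,
      (volume.restrict (Set.Ioo 0 (1 - η))).real (Set.Ico (m.xe j - η) (m.xe j)) ≤ η :=
    fun j => by
      rw [measureReal_restrict_apply measurableSet_Ico]
      refine (measureReal_mono Set.inter_subset_left measure_Ico_lt_top.ne).trans ?_
      simp [Real.volume_real_Ico, hη.le]
  calc ∫ x in Set.Ioo 0 (1 - η), (m.pw w (x + η) - m.pw w x) ^ 2
      ≤ ∫ x in Set.Ioo 0 (1 - η), ∑ j ∈ Finset.Ico 1 m.I,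
          (Set.Ico (m.xe j - η) (m.xe j)).indicator (fun _ => (w (j + 1) - w j) ^ 2 / m.hp j) x :=
        integral_mono_of_nonneg (ae_of_all _ fun _ => sq_nonneg _) (integrable_finsetSum _ hint)
          ((ae_restrict_iff' measurableSet_Ioo).mpr
            (ae_of_all _ fun x hx => m.sq_pw_add_sub_pw_le w hη hx))
    _ = ∑ j ∈ Finset.Ico 1 m.I,
          (volume.restrict (Set.Ioo 0 (1 - η))).real (Set.Ico (m.xe j - η) (m.xe j)) *
          ((w (j + 1) - w j) ^ 2 / m.hp j) := by
        rw [integral_finsetSum _ hint]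
        simp only [integral_indicator_const _ measurableSet_Ico, smul_eq_mul]
    _ ≤ ∑ j ∈ Finset.Ico 1 m.I, η * ((w (j + 1) - w j) ^ 2 / m.hp j) := by
        gcongr with j hj
        · exact div_nonneg (sq_nonneg _) (m.hp_pos_of_mem (m.Ico_one_subset_range hj)).le
        · exact hwindow j
    _ ≤ η * m.norm1sq w := by
        rw [← Finset.mul_sum, m.norm1sq_eq_energy]
        gcongr
        have := m.sum_le_energy w m.Ico_one_subset_range
        nlinarith [sq_nonneg (w 0), sq_nonneg (w (m.I + 1))]

end Mesh

lemma Stable.abs_charge_le {m : Mesh} {d : Data} {K : ℕ} {sol : Sp → ℕ → ℕ → ℝ}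
    (hs : Stable m d K sol) {k i : ℕ} (hk : k ≤ K) (hi : i ≤ m.I + 1) :
    |3 * sol Sp.P k i - sol Sp.N k i + d.rho| ≤ 3 * d.umax Sp.P + d.umax Sp.N + |d.rho| := by
  obtain ⟨hP₀, hP₁⟩ := hs Sp.P k hk i hi
  obtain ⟨hN₀, hN₁⟩ := hs Sp.N k hk i hi
  rw [abs_le]
  constructor <;> linarith [neg_abs_le d.rho, le_abs_self d.rho]

end Corrosion

open Corrosion in
theorem space_translate_estimate_potential_general
    (d : Data) (ha0 : 0 < d.alpha0) (ha1 : 0 < d.alpha1)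
    (T : ℝ) (hT : 0 < T) :
    ∃ C : ℝ, 0 < C ∧ ∀ (K : ℕ), 1 ≤ K → ∀ (m : Mesh)
      (sol : Sp → ℕ → ℕ → ℝ) (Psi : ℕ → ℕ → ℝ),
      Scheme m d T K sol Psi → Stable m d K sol →
      ∀ η : ℝ, 0 < η → η < m.size →
        (∫ t in Set.Ioo (0:ℝ) T, ∫ x in Set.Ioo (0:ℝ) (1 - η),
          (apx m T K Psi (x + η) t - apx m T K Psi x t) ^ 2) ≤ C * η := by
  set κ := d.lam ^ 2
  set C₁ := ((2 * (3 * d.umax Sp.P + d.umax Sp.N + |d.rho|) + κ / d.alpha0 * |d.dPsi0| +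
    κ / d.alpha1 * |d.V - d.dPsi1|) / min κ (min (κ / d.alpha0) (κ / d.alpha1))) ^ 2
  have hκ : 0 < κ := pow_pos d.lam_pos 2
  have hC₁ : 0 < C₁ := by
    have := d.umax_pos Sp.P; have := d.umax_pos Sp.N
    have : 0 < min κ (min (κ / d.alpha0) (κ / d.alpha1)) :=
      lt_min hκ (lt_min (div_pos hκ ha0) (div_pos hκ ha1))
    positivity
  refine ⟨C₁ * T, mul_pos hC₁ hT, fun K hK m sol Psi hS hstab η hη _ => ?_⟩
  have hlevel : ∀ k < K, m.norm1sq (Psi (k + 1)) ≤ C₁ := fun k hk =>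
    m.norm1sq_le_of_poisson hκ ha0 ha1
      (fun i _ hi => hstab.abs_charge_le (k := k + 1) hk (by omega))
      (hS.2.1 k hk) (hS.2.2.2.1 k hk) (hS.2.2.2.2.1 k hk)
  have hslice : ∀ t ∈ Set.Ioo 0 T,
      ‖∫ x in Set.Ioo (0:ℝ) (1 - η), (apx m T K Psi (x + η) t - apx m T K Psi x t) ^ 2‖ ≤
        η * C₁ := fun t ht => by
    rw [Real.norm_of_nonneg (integral_nonneg fun _ => sq_nonneg _)]
    exact (m.integral_sq_pw_add_sub_pw_le _ hη).trans
      (mul_le_mul_of_nonneg_left (hlevel _ (floor_div_div_lt hK ht)) hη.le)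
  calc _ ≤ η * C₁ * volume.real (Set.Ioo 0 T) :=
        (le_abs_self _).trans (norm_setIntegral_le_of_norm_le_const measure_Ioo_lt_top hslice)
    _ = C₁ * T * η := by rw [Real.volume_real_Ioo_of_le hT.le]; ring

open Corrosion in
/-- space translate estimate for the approximate potential. -/
theorem space_translate_estimate_potential
    (d : Data) (heps : 0 < d.eps) (ha0 : 0 < d.alpha0) (ha1 : 0 < d.alpha1) (hH : d.HypH)
    (T : ℝ) (hT : 0 < T) :
    ∃ C : ℝ, 0 < C ∧ ∀ (K : ℕ), 1 ≤ K → ∀ (m : Mesh)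
      (sol : Sp → ℕ → ℕ → ℝ) (Psi : ℕ → ℕ → ℝ),
      Scheme m d T K sol Psi → Stable m d K sol →
      ∀ η : ℝ, 0 < η → η < m.size →
        (∫ t in Set.Ioo (0:ℝ) T, ∫ x in Set.Ioo (0:ℝ) (1 - η),
          (apx m T K Psi (x + η) t - apx m T K Psi x t) ^ 2) ≤ C * η :=
  space_translate_estimate_potential_general d ha0 ha1 T hT
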